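/- arXiv:2302.04715 — 2 statements merged into one kernel-verified Lean document; each statement's English description precedes it below -/
import Mathlib

section
/- In the shrinkage prior setup with a ≥ 1 and L satisfying Assumption 1 (in particular L(t) ≤ M for all t > 0), there exists a function ε : (0,1) → ℝ with ε(τ) → 0 as τ → 0⁺ such that for every τ ∈ (0,1) and every w ≥ 0, the posterior shrinkage weight satisfies R(τ, w) ≤ (K M / a) · τ · exp(w/2) · (1 + ε(τ)). (Lemma 3, case a ≥ 1.) -/
open Filter MeasureTheory

/-- Unnormalized posterior density of the shrinkage coefficient `κ ∈ (0,1)`: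
`π(κ; τ, w) = κ^(a+m/2-1) (1-κ)^(-a-1) L(τ⁻²(κ⁻¹-1)) exp(-κw/2)`. -/
noncomputable def postDensity (a : ℝ) (m : ℕ) (L : ℝ → ℝ) (τ w κ : ℝ) : ℝ :=
  κ ^ (a + (m : ℝ) / 2 - 1) * (1 - κ) ^ (-a - 1) * L ((κ⁻¹ - 1) / τ ^ 2) *
    Real.exp (-(κ * w) / 2)

/-- Posterior shrinkage weight `R(τ, w) = E(1 - κ | τ, w)`. -/
noncomputable def shrinkWeight (a : ℝ) (m : ℕ) (L : ℝ → ℝ) (τ w : ℝ) : ℝ :=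
  (∫ κ in (0 : ℝ)..1, (1 - κ) * postDensity a m L τ w κ) /
    ∫ κ in (0 : ℝ)..1, postDensity a m L τ w κ

/-!
Substituting `κ = (1 + τ² t)⁻¹` turns both integrals defining `R(τ, w)` into integrals over
`t > 0` against the prior density `t^(-a-1) L(t)`, up to the common factor `(τ²)^(-a)` and a
factor `(1 + τ² t)^(-m/2) exp(-κ w / 2)` lying between `e^(-w/2) (1 + t)^(-m/2)` and `1`.
So the denominator is at least `e^(-w/2) (τ²)^(-a) c` with `c > 0`, while
`1 - κ = τ² t / (1 + τ² t) ≤ (τ² t)^(3/4)` bounds the numerator by `(τ²)^(3/4 - a) J`, where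
`J = ∫ t^(3/4) t^(-a-1) L(t) dt` is finite because `L` is bounded and `a > 3/4`. Hence
`R(τ, w) ≤ τ e^(w/2) · τ^(1/2) J / c`, and the last factor tends to `0` as `τ → 0⁺`.
-/

open Set Topology

lemma one_sub_inv_one_add_le_rpow {x p : ℝ} (hx : 0 < x) (hp₀ : 0 ≤ p) (hp₁ : p ≤ 1) :
    1 - (1 + x)⁻¹ ≤ x ^ p := by
  rcases le_total x 1 with hx1 | hx1
  · calc 1 - (1 + x)⁻¹ = x / (1 + x) := by field_simp; ring
      _ ≤ x := div_le_self hx.le (by linarith)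
      _ = x ^ (1 : ℝ) := (Real.rpow_one x).symm
      _ ≤ x ^ p := Real.rpow_le_rpow_of_exponent_ge hx hx1 hp₁
  · calc 1 - (1 + x)⁻¹ ≤ 1 := by simp; positivity
      _ ≤ x ^ p := Real.one_le_rpow hx1 hp₀

lemma exists_tendsto_zero_le_mul_one_add {α : Type*} {l : Filter α} {g : α → ℝ} {A : ℝ}
    (hA : 0 < A) (hg : Tendsto g l (𝓝 0)) :
    ∃ ε : α → ℝ, Tendsto ε l (𝓝 0) ∧ ∀ x, g x ≤ A * (1 + ε x) := by
  refine ⟨fun x => max 0 (g x / A - 1), ?_, fun x => ?_⟩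
  · simpa using (tendsto_const_nhds (x := (0 : ℝ))).max ((hg.div_const A).sub_const 1)
  · calc g x = A * (1 + (g x / A - 1)) := by field_simp; ring
      _ ≤ A * (1 + max 0 (g x / A - 1)) := by gcongr; exact le_max_right _ _

section ChangeOfVariables

variable {b : ℝ}

lemma injOn_inv_one_add_mul (hb : 0 < b) : InjOn (fun t => (1 + b * t)⁻¹) (Ioi 0) :=
  fun x _ y _ hxy => mul_left_cancel₀ hb.ne' (by linarith [inv_inj.mp hxy])

lemma image_inv_one_add_mul_Ioi (hb : 0 < b) : (fun t => (1 + b * t)⁻¹) '' Ioi 0 = Ioo 0 1 := by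
  ext κ
  constructor
  · rintro ⟨t, ht, rfl⟩
    have : 1 < 1 + b * t := by have := mul_pos hb ht; linarith
    exact ⟨by positivity, inv_lt_one_of_one_lt₀ this⟩
  · rintro ⟨hκ0, hκ1⟩
    refine ⟨(κ⁻¹ - 1) / b, div_pos (by linarith [one_lt_inv₀ hκ0 |>.mpr hκ1]) hb, ?_⟩
    simp [mul_div_cancel₀ _ hb.ne']

lemma hasDerivAt_inv_one_add_mul {t : ℝ} (ht : 0 < 1 + b * t) :
    HasDerivAt (fun t => (1 + b * t)⁻¹) (-(b / (1 + b * t) ^ 2)) t := by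
  have h : HasDerivAt (fun t => 1 + b * t) b t := by
    simpa using ((hasDerivAt_id t).const_mul b).const_add 1
  exact neg_div ((1 + b * t) ^ 2) b ▸ h.inv ht.ne'

lemma intervalIntegral_zero_one_eq_integral_Ioi (hb : 0 < b) (g : ℝ → ℝ) :
    ∫ κ in (0 : ℝ)..1, g κ = ∫ t in Ioi 0, b / (1 + b * t) ^ 2 * g (1 + b * t)⁻¹ := by
  rw [intervalIntegral.integral_of_le zero_le_one, integral_Ioc_eq_integral_Ioo,
    ← image_inv_one_add_mul_Ioi hb, integral_image_eq_integral_abs_deriv_smul measurableSet_Ioi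
      (fun t ht => (hasDerivAt_inv_one_add_mul (by nlinarith [mul_pos hb ht])).hasDerivWithinAt)
      (injOn_inv_one_add_mul hb)]
  refine setIntegral_congr_fun measurableSet_Ioi fun t ht => ?_
  have : 0 < 1 + b * t := by have := mul_pos hb ht; linarith
  simp [abs_of_nonneg (by positivity : 0 ≤ b / (1 + b * t) ^ 2)]

end ChangeOfVariables

/-- The integrand of `shrinkWeight` after the substitution `κ = (1 + b t)⁻¹` with `b = τ²`,
divided by `b ^ (-a)`. -/
noncomputable def latentDensity (a : ℝ) (m : ℕ) (L : ℝ → ℝ) (b w t : ℝ) : ℝ :=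
  t ^ (-a - 1) * L t * ((1 + b * t) ^ (-(m : ℝ) / 2) * Real.exp (-((1 + b * t)⁻¹ * w) / 2))

lemma jacobian_mul_postDensity (a : ℝ) (m : ℕ) (L : ℝ → ℝ) {τ w t : ℝ} (hτ : 0 < τ)
    (ht : 0 < t) :
    τ ^ 2 / (1 + τ ^ 2 * t) ^ 2 * postDensity a m L τ w (1 + τ ^ 2 * t)⁻¹ =
      (τ ^ 2) ^ (-a) * latentDensity a m L (τ ^ 2) w t := by
  set b := τ ^ 2
  set h := 1 + b * t
  have hb : 0 < b := by positivity
  have hh : 0 < h := by positivity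
  have hL : ((h⁻¹)⁻¹ - 1) / τ ^ 2 = t := by field_simp; ring
  have hκ : 1 - h⁻¹ = b * t * h⁻¹ := by field_simp; ring
  have hb' : b ^ (-a - 1) = b ^ (-a) / b := Real.rpow_sub_one hb.ne' _
  have hh₁ : h ^ (-a - 1) = (h ^ a)⁻¹ / h := by rw [Real.rpow_sub_one hh.ne', Real.rpow_neg hh.le]
  have hh₂ : h ^ (a + (m : ℝ) / 2 - 1) = h ^ a * h ^ ((m : ℝ) / 2) / h := by
    rw [Real.rpow_sub_one hh.ne', Real.rpow_add hh]
  have hh₃ : h ^ (-(m : ℝ) / 2) = (h ^ ((m : ℝ) / 2))⁻¹ := by rw [neg_div, Real.rpow_neg hh.le]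
  rw [postDensity, latentDensity, hL, hκ, Real.mul_rpow (by positivity) (by positivity),
    Real.mul_rpow hb.le ht.le, Real.inv_rpow hh.le, Real.inv_rpow hh.le, hb', hh₁, hh₂, hh₃]
  have : 0 < h ^ a := by positivity
  have : 0 < h ^ ((m : ℝ) / 2) := by positivity
  field_simp
  rw [mul_comm h]

lemma shrinkWeight_eq_div_integral_latentDensity (a : ℝ) (m : ℕ) (L : ℝ → ℝ) {τ w : ℝ}
    (hτ : 0 < τ) :
    shrinkWeight a m L τ w =
      (∫ t in Ioi 0, (1 - (1 + τ ^ 2 * t)⁻¹) * latentDensity a m L (τ ^ 2) w t) /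
        ∫ t in Ioi 0, latentDensity a m L (τ ^ 2) w t := by
  have hsubst (g : ℝ → ℝ) : ∫ κ in (0 : ℝ)..1, g κ * postDensity a m L τ w κ =
      (τ ^ 2) ^ (-a) * ∫ t in Ioi 0, g (1 + τ ^ 2 * t)⁻¹ * latentDensity a m L (τ ^ 2) w t := by
    rw [intervalIntegral_zero_one_eq_integral_Ioi (pow_pos hτ 2), ← integral_const_mul]
    refine setIntegral_congr_fun measurableSet_Ioi fun t ht => ?_
    rw [mul_left_comm, jacobian_mul_postDensity a m L hτ ht, mul_left_comm]
  have hden := hsubst fun _ => 1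
  simp only [one_mul] at hden
  rw [shrinkWeight, hsubst fun κ => 1 - κ, hden, mul_div_mul_left _ _ (by positivity)]

section Bounds

variable {a : ℝ} {m : ℕ} {L : ℝ → ℝ} {b w : ℝ}

lemma neg_natCast_div_two_nonpos (m : ℕ) : -(m : ℝ) / 2 ≤ 0 :=
  neg_div 2 (m : ℝ) ▸ neg_nonpos.mpr (by positivity)

lemma one_add_mul_rpow_mul_exp_le_one {t : ℝ} (hb : 0 ≤ b) (ht : 0 ≤ t) (hw : 0 ≤ w) :
    (1 + b * t) ^ (-(m : ℝ) / 2) * Real.exp (-((1 + b * t)⁻¹ * w) / 2) ≤ 1 := by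
  have hbt : 1 ≤ 1 + b * t := by nlinarith
  refine mul_le_one₀ (Real.rpow_le_one_of_one_le_of_nonpos hbt (neg_natCast_div_two_nonpos m))
    (by positivity) (Real.exp_le_one_iff.mpr ?_)
  have : 0 ≤ (1 + b * t)⁻¹ * w := by positivity
  linarith

lemma exp_mul_one_add_rpow_le {t : ℝ} (hb₀ : 0 ≤ b) (hb₁ : b ≤ 1) (ht : 0 ≤ t) (hw : 0 ≤ w) :
    Real.exp (-(w / 2)) * (1 + t) ^ (-(m : ℝ) / 2) ≤
      (1 + b * t) ^ (-(m : ℝ) / 2) * Real.exp (-((1 + b * t)⁻¹ * w) / 2) := by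
  have hbt : 1 ≤ 1 + b * t := by nlinarith
  rw [mul_comm]
  refine mul_le_mul ?_ ?_ (by positivity) (by positivity)
  · exact Real.rpow_le_rpow_of_nonpos (by positivity) (by nlinarith) (neg_natCast_div_two_nonpos m)
  · rw [Real.exp_le_exp]
    have : (1 + b * t)⁻¹ * w ≤ w := mul_le_of_le_one_left hw (inv_le_one_of_one_le₀ hbt)
    linarith

lemma integrableOn_latentDensity (hLint : IntegrableOn (fun t => t ^ (-a - 1) * L t) (Ioi 0))
    (hb : 0 ≤ b) (hw : 0 ≤ w) : IntegrableOn (latentDensity a m L b w) (Ioi 0) := by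
  refine hLint.mul_bdd (c := 1) (Measurable.aestronglyMeasurable (by fun_prop)) ?_
  filter_upwards [ae_restrict_mem measurableSet_Ioi] with t ht
  rw [Real.norm_of_nonneg (by have := ht.out; positivity)]
  exact one_add_mul_rpow_mul_exp_le_one hb ht.out.le hw

lemma latentDensity_nonneg (hLnn : ∀ t > 0, 0 ≤ L t) {t : ℝ} (ht : 0 < t) (hb : 0 ≤ b) :
    0 ≤ latentDensity a m L b w t :=
  mul_nonneg (mul_nonneg (by positivity) (hLnn t ht)) (by positivity)

lemma latentDensity_le (hLnn : ∀ t > 0, 0 ≤ L t) {t : ℝ} (ht : 0 < t) (hb : 0 ≤ b)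
    (hw : 0 ≤ w) : latentDensity a m L b w t ≤ t ^ (-a - 1) * L t :=
  mul_le_of_le_one_right (mul_nonneg (by positivity) (hLnn t ht))
    (one_add_mul_rpow_mul_exp_le_one hb ht.le hw)

lemma exp_mul_integral_le_integral_latentDensity (hLnn : ∀ t > 0, 0 ≤ L t)
    (hLint : IntegrableOn (fun t => t ^ (-a - 1) * L t) (Ioi 0)) (hb₀ : 0 ≤ b) (hb₁ : b ≤ 1)
    (hw : 0 ≤ w) :
    Real.exp (-(w / 2)) * ∫ t in Ioi 0, t ^ (-a - 1) * L t * (1 + t) ^ (-(m : ℝ) / 2) ≤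
      ∫ t in Ioi 0, latentDensity a m L b w t := by
  rw [← integral_const_mul]
  refine integral_mono_of_nonneg ?_ (integrableOn_latentDensity hLint hb₀ hw) ?_ <;>
    filter_upwards [ae_restrict_mem measurableSet_Ioi] with t ht
  · have := hLnn t ht
    have := ht.out
    positivity
  · calc Real.exp (-(w / 2)) * (t ^ (-a - 1) * L t * (1 + t) ^ (-(m : ℝ) / 2))
        = t ^ (-a - 1) * L t * (Real.exp (-(w / 2)) * (1 + t) ^ (-(m : ℝ) / 2)) := by ring
      _ ≤ latentDensity a m L b w t :=
        mul_le_mul_of_nonneg_left (exp_mul_one_add_rpow_le hb₀ hb₁ ht.out.le hw)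
          (mul_nonneg (by have := ht.out; positivity) (hLnn t ht))

lemma integral_one_sub_mul_latentDensity_le {p : ℝ} (hLnn : ∀ t > 0, 0 ≤ L t) (hb : 0 < b)
    (hw : 0 ≤ w) (hp₀ : 0 ≤ p) (hp₁ : p ≤ 1)
    (hpint : IntegrableOn (fun t => t ^ p * (t ^ (-a - 1) * L t)) (Ioi 0)) :
    ∫ t in Ioi 0, (1 - (1 + b * t)⁻¹) * latentDensity a m L b w t ≤
      b ^ p * ∫ t in Ioi 0, t ^ p * (t ^ (-a - 1) * L t) := by
  rw [← integral_const_mul]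
  refine integral_mono_of_nonneg ?_ (hpint.const_mul _) ?_ <;>
    filter_upwards [ae_restrict_mem measurableSet_Ioi] with t ht
  · have : (1 + b * t)⁻¹ ≤ 1 := inv_le_one_of_one_le₀ (by nlinarith [mul_pos hb ht])
    exact mul_nonneg (by linarith) (latentDensity_nonneg hLnn ht hb.le)
  · calc (1 - (1 + b * t)⁻¹) * latentDensity a m L b w t ≤ (b * t) ^ p * (t ^ (-a - 1) * L t) :=
          mul_le_mul (one_sub_inv_one_add_le_rpow (mul_pos hb ht) hp₀ hp₁)
            (latentDensity_le hLnn ht hb.le hw) (latentDensity_nonneg hLnn ht hb.le)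
            (Real.rpow_nonneg (mul_pos hb ht).le _)
      _ = b ^ p * (t ^ p * (t ^ (-a - 1) * L t)) := by
          rw [Real.mul_rpow hb.le ht.out.le, mul_assoc]

lemma integrableOn_rpow_mul_of_lt {p M : ℝ} (hp₀ : 0 ≤ p) (hpa : p < a)
    (hLnn : ∀ t > 0, 0 ≤ L t) (hLup : ∀ t > 0, L t ≤ M)
    (hLint : IntegrableOn (fun t => t ^ (-a - 1) * L t) (Ioi 0)) :
    IntegrableOn (fun t => t ^ p * (t ^ (-a - 1) * L t)) (Ioi 0) := by
  have hmeas : Measurable fun t : ℝ => t ^ p := by fun_prop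
  rw [← Ioc_union_Ioi_eq_Ioi zero_le_one]
  refine IntegrableOn.union ?_ ?_
  · refine (hLint.mono_set Ioc_subset_Ioi_self).bdd_mul (c := 1) hmeas.aestronglyMeasurable ?_
    filter_upwards [ae_restrict_mem measurableSet_Ioc] with t ht
    rw [Real.norm_of_nonneg (Real.rpow_nonneg ht.1.le _)]
    exact Real.rpow_le_one ht.1.le ht.2 hp₀
  · have hdom := (integrableOn_Ioi_rpow_of_lt (a := p + (-a - 1)) (by linarith) one_pos).const_mul M
    refine Integrable.mono' hdom (hmeas.aestronglyMeasurable.mul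
        (hLint.mono_set (Ioi_subset_Ioi zero_le_one)).aestronglyMeasurable) ?_
    filter_upwards [ae_restrict_mem measurableSet_Ioi] with t ht
    have ht₀ : (0 : ℝ) < t := zero_lt_one.trans ht
    rw [Real.norm_of_nonneg (by have := hLnn t ht₀; positivity), ← mul_assoc,
      ← Real.rpow_add ht₀, mul_comm M]
    exact mul_le_mul_of_nonneg_left (hLup t ht₀) (by positivity)

lemma integral_rpow_mul_one_add_rpow_pos (hLpos : ∀ t > 0, 0 < L t)
    (hLint : IntegrableOn (fun t => t ^ (-a - 1) * L t) (Ioi 0)) :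
    0 < ∫ t in Ioi 0, t ^ (-a - 1) * L t * (1 + t) ^ (-(m : ℝ) / 2) := by
  have hpos : ∀ t ∈ Ioi (0 : ℝ), 0 < t ^ (-a - 1) * L t * (1 + t) ^ (-(m : ℝ) / 2) :=
    fun t ht => have := hLpos t ht; have := ht.out; by positivity
  have hint : IntegrableOn (fun t => t ^ (-a - 1) * L t * (1 + t) ^ (-(m : ℝ) / 2)) (Ioi 0) := by
    refine hLint.mul_bdd (c := 1) (Measurable.aestronglyMeasurable (by fun_prop)) ?_
    filter_upwards [ae_restrict_mem measurableSet_Ioi] with t ht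
    have := ht.out
    rw [Real.norm_of_nonneg (by positivity)]
    exact Real.rpow_le_one_of_one_le_of_nonpos (by linarith) (neg_natCast_div_two_nonpos m)
  rw [setIntegral_pos_iff_support_of_nonneg_ae
    ((ae_restrict_mem measurableSet_Ioi).mono fun t ht => (hpos t ht).le) hint,
    inter_eq_right.mpr fun t ht => Function.mem_support.mpr (hpos t ht).ne']
  simp

lemma shrinkWeight_le {p τ : ℝ} (hLpos : ∀ t > 0, 0 < L t)
    (hLint : IntegrableOn (fun t => t ^ (-a - 1) * L t) (Ioi 0)) (hp₀ : 0 ≤ p) (hp₁ : p ≤ 1)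
    (hpint : IntegrableOn (fun t => t ^ p * (t ^ (-a - 1) * L t)) (Ioi 0))
    (hτ₀ : 0 < τ) (hτ₁ : τ ≤ 1) (hw : 0 ≤ w) :
    shrinkWeight a m L τ w ≤ Real.exp (w / 2) * (τ ^ 2) ^ p *
      (∫ t in Ioi 0, t ^ p * (t ^ (-a - 1) * L t)) /
        ∫ t in Ioi 0, t ^ (-a - 1) * L t * (1 + t) ^ (-(m : ℝ) / 2) := by
  have hLnn : ∀ t > 0, 0 ≤ L t := fun t ht => (hLpos t ht).le
  have hc := integral_rpow_mul_one_add_rpow_pos (m := m) hLpos hLint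
  rw [shrinkWeight_eq_div_integral_latentDensity a m L hτ₀]
  calc _ ≤ (τ ^ 2) ^ p * (∫ t in Ioi 0, t ^ p * (t ^ (-a - 1) * L t)) /
        (Real.exp (-(w / 2)) * ∫ t in Ioi 0, t ^ (-a - 1) * L t * (1 + t) ^ (-(m : ℝ) / 2)) :=
        div_le_div₀ (mul_nonneg (by positivity) (setIntegral_nonneg measurableSet_Ioi
            fun t ht => have := hLnn t ht; have := ht.out; by positivity))
          (integral_one_sub_mul_latentDensity_le hLnn (by positivity) hw hp₀ hp₁ hpint)
          (by positivity)
          (exp_mul_integral_le_integral_latentDensity hLnn hLint (by positivity)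
            (pow_le_one₀ hτ₀.le hτ₁) hw)
    _ = _ := by rw [Real.exp_neg]; field_simp

end Bounds

theorem lemma3_shrinkWeight_upper_bound_ge_one_general
    (a : ℝ) (ha : 1 ≤ a) (m : ℕ)
    (L : ℝ → ℝ) (hLpos : ∀ x > 0, 0 < L x)
    (M : ℝ) (hLup : ∀ t > 0, L t ≤ M)
    (K : ℝ) (hK : 0 < K)
    (hLint : IntegrableOn (fun t : ℝ => t ^ (-a - 1) * L t) (Set.Ioi 0)) :
    ∃ ε : ℝ → ℝ,
      Tendsto ε (nhdsWithin 0 (Set.Ioi 0)) (nhds 0) ∧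
      ∀ τ ∈ Set.Ioo (0 : ℝ) 1, ∀ w ≥ (0 : ℝ),
        shrinkWeight a m L τ w ≤ K * M / a * τ * Real.exp (w / 2) * (1 + ε τ) := by
  have hM : 0 < M := (hLpos 1 one_pos).trans_le (hLup 1 one_pos)
  set J := ∫ t in Ioi 0, t ^ (3 / 4 : ℝ) * (t ^ (-a - 1) * L t)
  set c := ∫ t in Ioi 0, t ^ (-a - 1) * L t * (1 + t) ^ (-(m : ℝ) / 2)
  have hJ := integrableOn_rpow_mul_of_lt (p := 3 / 4) (by norm_num) (by linarith)
    (fun t ht => (hLpos t ht).le) hLup hLint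
  have hg : Tendsto (fun τ : ℝ => τ ^ (1 / 2 : ℝ) * J / c) (𝓝[>] 0) (𝓝 0) := by
    have := ((Real.continuous_rpow_const (by norm_num : (0 : ℝ) ≤ 1 / 2)).tendsto 0).mono_left
      (nhdsWithin_le_nhds (s := Ioi 0))
    simpa using (this.mul_const J).div_const c
  obtain ⟨ε, hε, hgε⟩ := exists_tendsto_zero_le_mul_one_add (by positivity : 0 < K * M / a) hg
  refine ⟨ε, hε, fun τ ⟨hτ₀, hτ₁⟩ w hw => ?_⟩
  have hτ : (τ ^ 2) ^ (3 / 4 : ℝ) = τ * τ ^ (1 / 2 : ℝ) := by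
    rw [← Real.rpow_natCast, ← Real.rpow_mul hτ₀.le, ← Real.rpow_one_add' hτ₀.le (by norm_num)]
    norm_num
  calc shrinkWeight a m L τ w ≤ Real.exp (w / 2) * (τ ^ 2) ^ (3 / 4 : ℝ) * J / c :=
        shrinkWeight_le hLpos hLint (by norm_num) (by norm_num) hJ hτ₀ hτ₁.le hw
    _ = τ * Real.exp (w / 2) * (τ ^ (1 / 2 : ℝ) * J / c) := by rw [hτ]; ring
    _ ≤ τ * Real.exp (w / 2) * (K * M / a * (1 + ε τ)) := by gcongr; exact hgε τ
    _ = K * M / a * τ * Real.exp (w / 2) * (1 + ε τ) := by ring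

/-- **Lemma 3, case `a ≥ 1`.** In the shrinkage prior setup with `a ≥ 1` and `L` satisfying
Assumption 1 (in particular `L(t) ≤ M` for all `t > 0`), there exists a function
`ε : (0,1) → ℝ` with `ε(τ) → 0` as `τ → 0⁺` such that for every `τ ∈ (0,1)` and every `w ≥ 0`,
`R(τ, w) ≤ (K M / a) · τ · exp(w/2) · (1 + ε(τ))`. -/
theorem lemma3_shrinkWeight_upper_bound_ge_one
    (a : ℝ) (ha : 1 ≤ a) (m : ℕ) (hm : 1 ≤ m)
    (L : ℝ → ℝ) (hLmeas : Measurable L) (hLpos : ∀ x > 0, 0 < L x)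
    (hLsv : ∀ c > 0, Tendsto (fun x => L (c * x) / L x) atTop (nhds 1))
    (c₀ t₀ : ℝ) (hc₀ : 0 < c₀) (ht₀ : 0 < t₀) (hLlow : ∀ t ≥ t₀, c₀ ≤ L t)
    (M : ℝ) (hLup : ∀ t > 0, L t ≤ M)
    (K : ℝ) (hK : 0 < K)
    (hLint : IntegrableOn (fun t : ℝ => t ^ (-a - 1) * L t) (Set.Ioi 0))
    (hKval : ∫ t in Set.Ioi (0 : ℝ), t ^ (-a - 1) * L t = 1 / K) :
    ∃ ε : ℝ → ℝ,
      Tendsto ε (nhdsWithin 0 (Set.Ioi 0)) (nhds 0) ∧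
      ∀ τ ∈ Set.Ioo (0 : ℝ) 1, ∀ w ≥ (0 : ℝ),
        shrinkWeight a m L τ w ≤ K * M / a * τ * Real.exp (w / 2) * (1 + ε τ) :=
  lemma3_shrinkWeight_upper_bound_ge_one_general a ha m L hLpos M hLup K hK hLint
end

section
/- In the shrinkage prior setup with a ≥ 1/2 and L satisfying Assumption 1, let (τ_n) be positive reals with τ_n → 0, and for each n let W_n be a nonnegative random variable whose distribution is the Gamma distribution with shape m/2 and rate 1/2 (i.e. the chi-squared distribution with m degrees of freedom). Then R(τ_n, W_n) → 0 in probability as n → ∞. (Proposition 1: for an inactive group, the posterior shrinkage weight tends to 0 in probability.) -/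
open Filter MeasureTheory ProbabilityTheory

open Set Real Topology

/-! Fix `δ ∈ (0, 1)`. On `κ ≤ 1 - δ` the factor `(1 - κ)^{-a}` is at most `δ^{-a}` and the other
factors of `(1 - κ) π(κ)` are at most `1` or `M`, so the part of the numerator of `R(τ, w)` coming
from there is at most `M δ^{-a}`; the rest is at most `δ` times the denominator. On the window
`κ ∈ ((1 + 2t₀τ²)⁻¹, (1 + t₀τ²)⁻¹]`, of length `≍ τ²`, the argument of `L` is at least `t₀` and
`(1 - κ)^{-a-1} ≥ (2t₀τ²)^{-a-1}`, so the denominator is at least a constant times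
`e^{-w/2} τ^{-2a}`. Hence `R(τ, w) ≤ δ + A e^{w/2} τ^{2a}`. The `W_n` share one law, so
`e^{W_n/2}` is bounded in probability while `τ_n^{2a} → 0`. -/

section IntegralBounds

variable {f : ℝ → ℝ} {δ B D : ℝ}

lemma mul_measureReal_le_setIntegral {α : Type*} [MeasurableSpace α] {μ : Measure α}
    {g : α → ℝ} {s t : Set α} {c : ℝ} (hs : MeasurableSet s) (ht : MeasurableSet t)
    (hμt : μ t ≠ ⊤) (hts : t ⊆ s) (hgi : IntegrableOn g s μ) (hg : ∀ x ∈ s, 0 ≤ g x)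
    (hc : ∀ x ∈ t, c ≤ g x) :
    c * μ.real t ≤ ∫ x in s, g x ∂μ :=
  (setIntegral_ge_of_const_le_real ht hμt hc (hgi.mono_set hts)).trans
    (setIntegral_mono_set hgi (ae_restrict_of_forall_mem hs hg) hts.eventuallyLE)

lemma setIntegral_one_sub_mul_le (hδ : 0 < δ) (hδ1 : δ ≤ 1) (hfi : IntegrableOn f (Ioo 0 1))
    (hf : ∀ κ ∈ Ioo (0 : ℝ) 1, 0 ≤ f κ) (hB : ∀ κ ∈ Ioc 0 (1 - δ), (1 - κ) * f κ ≤ B) :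
    ∫ κ in Ioo 0 1, (1 - κ) * f κ ≤ (1 - δ) * B + δ * ∫ κ in Ioo 0 1, f κ := by
  have hgi : IntegrableOn (fun κ => (1 - κ) * f κ) (Ioo 0 1) :=
    hfi.continuousOn_mul_of_subset (continuous_const.sub continuous_id).continuousOn
      isCompact_Icc measurableSet_Ioo Ioo_subset_Icc_self
  have hleft : ∫ κ in Ioc 0 (1 - δ), (1 - κ) * f κ ≤ (1 - δ) * B := calc
    _ ≤ ∫ _ in Ioc 0 (1 - δ), B :=
        setIntegral_mono_on (hgi.mono_set (Ioc_subset_Ioo_right (by linarith)))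
          (integrableOn_const measure_Ioc_lt_top.ne) measurableSet_Ioc hB
    _ = (1 - δ) * B := by
        rw [setIntegral_const, smul_eq_mul, Real.volume_real_Ioc_of_le (by linarith), sub_zero]
  have hright : ∫ κ in Ioo (1 - δ) 1, (1 - κ) * f κ ≤ δ * ∫ κ in Ioo 0 1, f κ := calc
    _ ≤ ∫ κ in Ioo (1 - δ) 1, δ * f κ :=
        setIntegral_mono_on (hgi.mono_set (Ioo_subset_Ioo_left (by linarith)))
          ((hfi.mono_set (Ioo_subset_Ioo_left (by linarith))).const_mul δ) measurableSet_Ioo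
          fun κ hκ => mul_le_mul_of_nonneg_right (by linarith [hκ.1])
            (hf κ ⟨by linarith [hκ.1], hκ.2⟩)
    _ = δ * ∫ κ in Ioo (1 - δ) 1, f κ := integral_const_mul δ _
    _ ≤ δ * ∫ κ in Ioo 0 1, f κ := mul_le_mul_of_nonneg_left
        (setIntegral_mono_set hfi (ae_restrict_of_forall_mem measurableSet_Ioo hf)
          (Ioo_subset_Ioo_left (by linarith)).eventuallyLE) hδ.le
  have hsplit : ∫ κ in Ioo 0 1, (1 - κ) * f κ =
      (∫ κ in Ioc 0 (1 - δ), (1 - κ) * f κ) + ∫ κ in Ioo (1 - δ) 1, (1 - κ) * f κ := by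
    rw [← setIntegral_union (Ioc_disjoint_Ioi_same.mono_right Ioo_subset_Ioi_self)
      measurableSet_Ioo (hgi.mono_set (Ioc_subset_Ioo_right (by linarith)))
      (hgi.mono_set (Ioo_subset_Ioo_left (by linarith))),
      Ioc_union_Ioo_eq_Ioo (by linarith) (by linarith)]
  rw [hsplit]
  exact add_le_add hleft hright

lemma integral_one_sub_mul_div_integral_le (hδ : 0 < δ) (hδ1 : δ < 1)
    (hf : ∀ κ ∈ Ioo (0 : ℝ) 1, 0 ≤ f κ) (hB : ∀ κ ∈ Ioc 0 (1 - δ), (1 - κ) * f κ ≤ B)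
    (hD : 0 < D) (hDf : IntegrableOn f (Ioo 0 1) → D ≤ ∫ κ in Ioo 0 1, f κ) :
    (∫ κ in (0 : ℝ)..1, (1 - κ) * f κ) / (∫ κ in (0 : ℝ)..1, f κ) ≤ δ + B / D := by
  have hB0 : 0 ≤ B := by
    have h := hB (1 - δ) ⟨by linarith, le_rfl⟩
    rw [sub_sub_cancel] at h
    exact (mul_nonneg hδ.le (hf _ ⟨by linarith, by linarith⟩)).trans h
  simp only [intervalIntegral.integral_of_le zero_le_one, integral_Ioc_eq_integral_Ioo]
  by_cases hfi : IntegrableOn f (Ioo 0 1)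
  · have hI : D ≤ ∫ κ in Ioo 0 1, f κ := hDf hfi
    rw [div_le_iff₀ (hD.trans_le hI)]
    calc _ ≤ (1 - δ) * B + δ * ∫ κ in Ioo 0 1, f κ := setIntegral_one_sub_mul_le hδ hδ1.le hfi hf hB
      _ ≤ B / D * (∫ κ in Ioo 0 1, f κ) + δ * ∫ κ in Ioo 0 1, f κ := by
        have hBI : B ≤ B / D * ∫ κ in Ioo 0 1, f κ := by
          rw [div_mul_eq_mul_div, le_div_iff₀ hD]
          exact mul_le_mul_of_nonneg_left hI hB0
        nlinarith
      _ = _ := by ring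
  · -- the denominator is then the junk value `0`, and so is the quotient
    rw [integral_undef hfi, div_zero]
    positivity

end IntegralBounds

section PostDensity

variable {a : ℝ} {m : ℕ} {L : ℝ → ℝ} {τ w κ : ℝ}

lemma inv_sub_one_div_sq_pos (hτ : τ ≠ 0) (hκ : κ ∈ Ioo (0 : ℝ) 1) :
    0 < (κ⁻¹ - 1) / τ ^ 2 :=
  div_pos (sub_pos.2 ((one_lt_inv₀ hκ.1).2 hκ.2)) (by positivity)

lemma postDensity_nonneg (hL : ∀ t > 0, 0 ≤ L t) (hτ : τ ≠ 0) (hκ : κ ∈ Ioo (0 : ℝ) 1) :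
    0 ≤ postDensity a m L τ w κ :=
  mul_nonneg (mul_nonneg (mul_nonneg (rpow_nonneg hκ.1.le _)
    (rpow_nonneg (sub_nonneg.2 hκ.2.le) _)) (hL _ (inv_sub_one_div_sq_pos hτ hκ)))
    (exp_nonneg _)

lemma one_sub_mul_postDensity_le {M δ : ℝ} (hp : 0 ≤ a + m / 2 - 1) (ha : 0 ≤ a)
    (hL : ∀ t > 0, 0 ≤ L t) (hLM : ∀ t > 0, L t ≤ M) (hτ : τ ≠ 0) (hw : 0 ≤ w) (hδ : 0 < δ)
    (hκ : κ ∈ Ioc 0 (1 - δ)) :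
    (1 - κ) * postDensity a m L τ w κ ≤ M * δ ^ (-a) := by
  obtain ⟨hκ0, hκδ⟩ := hκ
  have hκ : κ ∈ Ioo (0 : ℝ) 1 := ⟨hκ0, by linarith⟩
  have h1κ : 0 < 1 - κ := by linarith
  have hexp : exp (-(κ * w) / 2) ≤ 1 := exp_le_one_iff.2 (by nlinarith)
  calc (1 - κ) * postDensity a m L τ w κ
      = κ ^ (a + m / 2 - 1) * (1 - κ) ^ (-a) * L ((κ⁻¹ - 1) / τ ^ 2) * exp (-(κ * w) / 2) := by
        rw [postDensity, ← sub_add_cancel (-a) 1, rpow_add_one h1κ.ne', sub_add_cancel]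
        ring
    _ ≤ 1 * δ ^ (-a) * M * 1 := by
        have hLκ := inv_sub_one_div_sq_pos hτ hκ
        have hM : 0 ≤ M := (hL _ hLκ).trans (hLM _ hLκ)
        have hpow : κ ^ (a + m / 2 - 1) * (1 - κ) ^ (-a) ≤ 1 * δ ^ (-a) :=
          mul_le_mul (rpow_le_one hκ0.le hκ.2.le hp)
            (rpow_le_rpow_of_nonpos hδ (by linarith) (neg_nonpos.2 ha))
            (rpow_nonneg h1κ.le _) zero_le_one
        refine mul_le_mul (mul_le_mul hpow (hLM _ hLκ) (hL _ hLκ) ?_) hexp (exp_nonneg _) ?_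
        all_goals positivity
    _ = M * δ ^ (-a) := by ring

lemma le_postDensity {c₀ t₀ : ℝ} (hp : 0 ≤ a + m / 2 - 1) (ha : -1 ≤ a) (hc₀ : 0 ≤ c₀)
    (hLlow : ∀ t ≥ t₀, c₀ ≤ L t) (ht₀ : 0 < t₀) (hτ : τ ≠ 0) (hs : 2 * (t₀ * τ ^ 2) ≤ 1)
    (hw : 0 ≤ w) (hκ : κ ∈ Ioc (1 + 2 * (t₀ * τ ^ 2))⁻¹ (1 + t₀ * τ ^ 2)⁻¹) :
    (1 / 2) ^ (a + m / 2 - 1) * (2 * (t₀ * τ ^ 2)) ^ (-a - 1) * c₀ * exp (-w / 2) ≤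
      postDensity a m L τ w κ := by
  set s := t₀ * τ ^ 2
  obtain ⟨hκl, hκu⟩ := hκ
  have hs0 : 0 < s := by positivity
  have hκ0 : 0 < κ := lt_trans (by positivity) hκl
  have hκ1 : κ < 1 := hκu.trans_lt (inv_lt_one_of_one_lt₀ (by linarith))
  have hhalf : 1 / 2 ≤ κ := by
    refine le_trans ?_ hκl.le
    rw [one_div]
    exact inv_anti₀ (by positivity) (by linarith)
  have h1κ : 1 - κ ≤ 2 * s := by
    have : 1 - 2 * s ≤ (1 + 2 * s)⁻¹ := by
      rw [← one_div, le_div_iff₀ (by linarith)]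
      nlinarith
    linarith
  have hLκ : t₀ ≤ (κ⁻¹ - 1) / τ ^ 2 := by
    rw [le_div_iff₀ (by positivity)]
    linarith [(le_inv_comm₀ hκ0 (by positivity : (0 : ℝ) < 1 + s)).1 hκu]
  have hexp : exp (-w / 2) ≤ exp (-(κ * w) / 2) := exp_le_exp.2 (by nlinarith)
  have hκp := rpow_nonneg hκ0.le (a + m / 2 - 1)
  have h1κp := mul_nonneg hκp (rpow_nonneg (sub_nonneg.2 hκ1.le) (-a - 1))
  unfold postDensity
  refine mul_le_mul (mul_le_mul (mul_le_mul ?_ ?_ (rpow_nonneg (by positivity) _) hκp)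
    (hLlow _ hLκ) hc₀ h1κp) hexp (exp_nonneg _) (mul_nonneg h1κp (hc₀.trans (hLlow _ hLκ)))
  · exact rpow_le_rpow (by norm_num) hhalf hp
  · exact rpow_le_rpow_of_nonpos (by linarith) h1κ (by linarith)

lemma le_integral_postDensity {c₀ t₀ : ℝ} (hp : 0 ≤ a + m / 2 - 1) (ha : -1 ≤ a)
    (hL : ∀ t > 0, 0 ≤ L t) (hc₀ : 0 ≤ c₀) (hLlow : ∀ t ≥ t₀, c₀ ≤ L t) (ht₀ : 0 < t₀)
    (hτ : τ ≠ 0) (hs : 2 * (t₀ * τ ^ 2) ≤ 1) (hw : 0 ≤ w)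
    (hint : IntegrableOn (postDensity a m L τ w) (Ioo 0 1)) :
    (1 / 2) ^ (a + m / 2 - 1) * 2 ^ (-a - 1) * c₀ / 3 * exp (-w / 2) * (t₀ * τ ^ 2) ^ (-a) ≤
      ∫ κ in Ioo 0 1, postDensity a m L τ w κ := by
  set s := t₀ * τ ^ 2
  have hs0 : 0 < s := by positivity
  have hsub : Ioc (1 + 2 * s)⁻¹ (1 + s)⁻¹ ⊆ Ioo 0 1 :=
    Ioc_subset_Ioo (by positivity) (inv_lt_one_of_one_lt₀ (by linarith))
  have hlen : s / 3 ≤ volume.real (Ioc (1 + 2 * s)⁻¹ (1 + s)⁻¹) := by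
    rw [Real.volume_real_Ioc_of_le (inv_anti₀ (by positivity) (by linarith)),
      inv_sub_inv (by positivity) (by positivity), le_div_iff₀ (by positivity)]
    have h3 : (1 + s) * (1 + 2 * s) ≤ 3 := by nlinarith
    nlinarith [mul_le_mul_of_nonneg_left h3 hs0.le]
  have hbound := mul_measureReal_le_setIntegral measurableSet_Ioo measurableSet_Ioc
    measure_Ioc_lt_top.ne hsub hint (fun κ hκ => postDensity_nonneg hL hτ hκ)
    (fun κ hκ => le_postDensity hp ha hc₀ hLlow ht₀ hτ hs hw hκ)
  refine le_trans (le_of_eq ?_) ((mul_le_mul_of_nonneg_left hlen ?_).trans hbound)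
  · rw [mul_rpow zero_le_two hs0.le, rpow_sub_one hs0.ne', rpow_neg hs0.le]
    field_simp
  · positivity

theorem exists_shrinkWeight_le {M c₀ t₀ δ : ℝ} (hp : 0 ≤ a + m / 2 - 1) (ha : 0 ≤ a)
    (hL : ∀ t > 0, 0 ≤ L t) (hLM : ∀ t > 0, L t ≤ M) (hc₀ : 0 < c₀) (ht₀ : 0 < t₀)
    (hLlow : ∀ t ≥ t₀, c₀ ≤ L t) (hδ : 0 < δ) (hδ1 : δ < 1) :
    ∃ A > 0, ∀ τ w, τ ≠ 0 → 2 * (t₀ * τ ^ 2) ≤ 1 → 0 ≤ w →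
      shrinkWeight a m L τ w ≤ δ + A * exp (w / 2) * (t₀ * τ ^ 2) ^ a := by
  have hM : 0 < M := hc₀.trans_le ((hLlow t₀ le_rfl).trans (hLM t₀ ht₀))
  set C := (1 / 2 : ℝ) ^ (a + m / 2 - 1) * 2 ^ (-a - 1) * c₀ / 3
  have hC : 0 < C := by positivity
  refine ⟨M * δ ^ (-a) / C, by positivity, fun τ w hτ hs hw => ?_⟩
  have hs0 : 0 < t₀ * τ ^ 2 := by positivity
  calc shrinkWeight a m L τ w
      ≤ δ + M * δ ^ (-a) / (C * exp (-w / 2) * (t₀ * τ ^ 2) ^ (-a)) :=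
        integral_one_sub_mul_div_integral_le hδ hδ1
          (fun κ hκ => postDensity_nonneg hL hτ hκ)
          (fun κ hκ => one_sub_mul_postDensity_le hp ha hL hLM hτ hw hδ hκ) (by positivity)
          (le_integral_postDensity hp (by linarith) hL hc₀.le hLlow ht₀ hτ hs hw)
    _ = δ + M * δ ^ (-a) / C * exp (w / 2) * (t₀ * τ ^ 2) ^ a := by
        rw [rpow_neg hs0.le, neg_div, exp_neg]
        field_simp

end PostDensity

section Probability

variable {Ω : Type*} [MeasurableSpace Ω] {P : Measure Ω}

lemma tendsto_measure_lt_of_map_eq {μ : Measure ℝ} [IsProbabilityMeasure μ]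
    {X : ℕ → Ω → ℝ} (hX : ∀ n, P.map (X n) = μ) {b : ℕ → ℝ} (hb : Tendsto b atTop atTop) :
    Tendsto (fun n => P {ω | b n < X n ω}) atTop (𝓝 0) := by
  have htail : Tendsto (fun x => μ (Ioi x)) atTop (𝓝 0) := by
    have h := tendsto_measure_iInter_atTop (μ := μ)
      (fun x => measurableSet_Ioi.nullMeasurableSet) antitone_Ioi ⟨0, measure_ne_top μ _⟩
    have hempty : ⋂ x : ℝ, Ioi x = ∅ := iInter_eq_empty_iff.2 fun x => ⟨x, lt_irrefl x⟩
    rw [hempty, measure_empty] at h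
    exact h
  refine (htail.comp hb).congr fun n => ?_
  have hXn : AEMeasurable (X n) P := aemeasurable_of_map_neZero (by rw [hX n]; infer_instance)
  rw [Function.comp_apply, ← hX n, Measure.map_apply_of_aemeasurable hXn measurableSet_Ioi]
  rfl

lemma ae_nonneg_of_map_eq_gammaMeasure {X : Ω → ℝ} {α β : ℝ} (hα : 0 < α) (hβ : 0 < β)
    (hX : P.map X = gammaMeasure α β) : ∀ᵐ ω ∂P, 0 ≤ X ω := by
  have := isProbabilityMeasure_gammaMeasure hα hβ
  have hXm : AEMeasurable X P := aemeasurable_of_map_neZero (by rw [hX]; infer_instance)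
  refine ae_of_ae_map hXm ?_
  rw [hX, gammaMeasure,
    ae_withDensity_iff (f := gammaPDF α β) (measurable_gammaPDFReal α β).ennreal_ofReal]
  refine Eventually.of_forall fun x hx => ?_
  by_contra hneg
  exact hx (gammaPDF_of_neg (not_le.1 hneg))

lemma tendsto_measure_lt_of_le_add_mul_exp {μ : Measure ℝ} [IsProbabilityMeasure μ]
    {X : ℕ → Ω → ℝ} (hX : ∀ n, P.map (X n) = μ) (hX0 : ∀ n, ∀ᵐ ω ∂P, 0 ≤ X n ω)
    {R : ℕ → ℝ → ℝ} {r : ℕ → ℝ} {δ ε : ℝ} (hδε : δ < ε) (hr : Tendsto r atTop (𝓝[>] 0))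
    (hR : ∀ᶠ n in atTop, ∀ x ≥ 0, R n x ≤ δ + r n * exp (x / 2)) :
    Tendsto (fun n => P {ω | ε < R n (X n ω)}) atTop (𝓝 0) := by
  have hrpos : ∀ᶠ n in atTop, 0 < r n := hr.eventually self_mem_nhdsWithin
  -- below the threshold `2 * log ((ε - δ) / r n)`, the bound on `R n` stays below `ε`
  have hb : Tendsto (fun n => 2 * log ((ε - δ) / r n)) atTop atTop := by
    refine (tendsto_log_atTop.comp ?_).const_mul_atTop two_pos
    simpa [div_eq_mul_inv] using
      (tendsto_inv_nhdsGT_zero.comp hr).const_mul_atTop (sub_pos.2 hδε)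
  refine tendsto_of_tendsto_of_tendsto_of_le_of_le' tendsto_const_nhds
    (tendsto_measure_lt_of_map_eq hX hb) (Eventually.of_forall fun _ => zero_le) ?_
  filter_upwards [hR, hrpos] with n hRn hrn
  refine measure_mono_ae ?_
  filter_upwards [hX0 n] with ω hω (hlt : ε < R n (X n ω))
  refine lt_of_not_ge fun (hle : X n ω ≤ 2 * log ((ε - δ) / r n)) => ?_
  have hexp : r n * exp (X n ω / 2) ≤ ε - δ := by
    rw [← le_div_iff₀' hrn, ← exp_log (div_pos (sub_pos.2 hδε) hrn)]
    exact exp_le_exp.2 (by linarith)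
  linarith [hRn _ hω]

end Probability

theorem prop1_inactive_group_shrinks_general
    {Ω : Type*} [MeasureSpace Ω]
    (a : ℝ) (ha : 1 / 2 ≤ a) (m : ℕ) (hm : 1 ≤ m)
    (L : ℝ → ℝ) (hLpos : ∀ x > 0, 0 < L x)
    (c₀ t₀ : ℝ) (hc₀ : 0 < c₀) (ht₀ : 0 < t₀) (hLlow : ∀ t ≥ t₀, c₀ ≤ L t)
    (M : ℝ) (hLup : ∀ t > 0, L t ≤ M)
    (τ : ℕ → ℝ) (hτpos : ∀ n, 0 < τ n) (hτ0 : Tendsto τ atTop (nhds 0))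
    (W : ℕ → Ω → ℝ)
    (hWlaw : ∀ n, Measure.map (W n) ℙ = gammaMeasure ((m : ℝ) / 2) (1 / 2)) :
    ∀ ε > (0 : ℝ),
      Tendsto (fun n => ℙ {ω | ε < shrinkWeight a m L (τ n) (W n ω)}) atTop (nhds 0) := by
  intro ε hε
  have hm2 : (0 : ℝ) < m / 2 := by positivity
  have := isProbabilityMeasure_gammaMeasure hm2 one_half_pos
  have hp : 0 ≤ a + m / 2 - 1 := by linarith [(Nat.one_le_cast.2 hm : (1 : ℝ) ≤ m)]
  have ha0 : 0 < a := by linarith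
  obtain ⟨A, hA, hR⟩ := exists_shrinkWeight_le (δ := min (ε / 2) (1 / 2)) hp ha0.le
    (fun t ht => (hLpos t ht).le) hLup hc₀ ht₀ hLlow (by positivity)
    ((min_le_right _ _).trans_lt one_half_lt_one)
  have hs : Tendsto (fun n => t₀ * τ n ^ 2) atTop (𝓝 0) := by
    simpa using (hτ0.pow 2).const_mul t₀
  have hr : Tendsto (fun n => A * (t₀ * τ n ^ 2) ^ a) atTop (𝓝[>] 0) := by
    refine tendsto_nhdsWithin_iff.2 ⟨?_, Eventually.of_forall fun n => ?_⟩
    · simpa [zero_rpow ha0.ne'] using (hs.rpow_const (Or.inr ha0.le)).const_mul A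
    · have := hτpos n
      exact mem_Ioi.2 (by positivity)
  refine tendsto_measure_lt_of_le_add_mul_exp hWlaw
    (fun n => ae_nonneg_of_map_eq_gammaMeasure hm2 one_half_pos (hWlaw n))
    ((min_le_left (ε / 2) (1 / 2)).trans_lt (half_lt_self hε)) hr ?_
  filter_upwards [hs.eventually (eventually_le_nhds one_half_pos)] with n hn w hw
  rw [mul_right_comm]
  exact hR (τ n) w (hτpos n).ne' (by linarith) hw

/-- **Proposition 1.** In the shrinkage prior setup with `a ≥ 1/2` and `L` satisfying Assumption 1,
if `τ_n → 0` and each `W_n` is chi-squared distributed with `m` degrees of freedom (i.e. Gamma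
with shape `m/2`, rate `1/2`), then the posterior shrinkage weight `R(τ_n, W_n) → 0` in
probability. -/
theorem prop1_inactive_group_shrinks
    {Ω : Type*} [MeasureSpace Ω] [IsProbabilityMeasure (ℙ : Measure Ω)]
    (a : ℝ) (ha : 1 / 2 ≤ a) (m : ℕ) (hm : 1 ≤ m)
    (L : ℝ → ℝ) (hLmeas : Measurable L) (hLpos : ∀ x > 0, 0 < L x)
    (hLsv : ∀ c > 0, Tendsto (fun x => L (c * x) / L x) atTop (nhds 1))
    (c₀ t₀ : ℝ) (hc₀ : 0 < c₀) (ht₀ : 0 < t₀) (hLlow : ∀ t ≥ t₀, c₀ ≤ L t)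
    (M : ℝ) (hLup : ∀ t > 0, L t ≤ M)
    (K : ℝ) (hK : 0 < K)
    (hLint : IntegrableOn (fun t : ℝ => t ^ (-a - 1) * L t) (Set.Ioi 0))
    (hKval : ∫ t in Set.Ioi (0 : ℝ), t ^ (-a - 1) * L t = 1 / K)
    (τ : ℕ → ℝ) (hτpos : ∀ n, 0 < τ n) (hτ0 : Tendsto τ atTop (nhds 0))
    (W : ℕ → Ω → ℝ) (hWmeas : ∀ n, Measurable (W n))
    (hWlaw : ∀ n, Measure.map (W n) ℙ = gammaMeasure ((m : ℝ) / 2) (1 / 2)) :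
    ∀ ε > (0 : ℝ),
      Tendsto (fun n => ℙ {ω | ε < shrinkWeight a m L (τ n) (W n ω)}) atTop (nhds 0) :=
  prop1_inactive_group_shrinks_general a ha m hm L hLpos c₀ t₀ hc₀ ht₀ hLlow M hLup τ hτpos hτ0 W
    hWlaw
end
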